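/- Let n ≥ 2 and let g_1,…,g_{n+1} be real constants. Define Q : ℝ^n × ℝ^n → ℝ by Q(x,z) = exp( g_1 e^{x_1 + z_1} + Σ_{i=1}^{n−1} ( e^{x_i − z_i} + g_{i+1} e^{z_{i+1} − x_i} ) + e^{x_n − z_n} + g_{n+1} e^{−x_n − z_n} ). Then for all x, z ∈ ℝ^n: −(1/2) Σ_{i=1}^{n} ∂²Q/∂x_i² + [ 2 g_1 e^{2 x_1} + Σ_{i=1}^{n−1} g_{i+1} e^{x_{i+1} − x_i} + g_n g_{n+1} e^{−x_n − x_{n−1}} ] Q = −(1/2) Σ_{i=1}^{n} ∂²Q/∂z_i² + [ g_1 g_2 e^{z_1 + z_2} + Σ_{i=1}^{n−1} g_{i+1} e^{z_{i+1} − z_i} + 2 g_{n+1} e^{−2 z_n} ] Q. That is, Q intertwines two quadratic Hamiltonians of the twisted affine A^{(2)}_{2n−1} closed Toda chain with different coupling constants. -/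

import Mathlib

open Real

/-- Second partial derivative of `f` in the `i`-th coordinate at `x`. -/
noncomputable def pd2 {k : ℕ} (f : (Fin k → ℝ) → ℝ) (i : Fin k) (x : Fin k → ℝ) : ℝ :=
  deriv (deriv (fun t : ℝ => f (Function.update x i t))) (x i)

/-- The elementary kernel intertwining two `A^{(2)}_{2n−1}` closed Toda chain
Hamiltonians with different couplings (`n = m + 2 ≥ 2`):
`Q(x,z) = exp( g_1 e^{x_1+z_1} + Σ_{i=1}^{n−1} ( e^{x_i − z_i} + g_{i+1} e^{z_{i+1} − x_i} ) + e^{x_n − z_n} + g_{n+1} e^{−x_n − z_n} )`. -/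
noncomputable def Qker (m : ℕ) (g : Fin (m + 3) → ℝ)
    (x z : Fin (m + 2) → ℝ) : ℝ :=
  Real.exp (g 0 * Real.exp (x 0 + z 0)
    + (∑ i : Fin (m + 1), (Real.exp (x i.castSucc - z i.castSucc)
        + g i.succ.castSucc * Real.exp (z i.succ - x i.castSucc)))
    + Real.exp (x (Fin.last (m + 1)) - z (Fin.last (m + 1)))
    + g (Fin.last (m + 2)) * Real.exp (-x (Fin.last (m + 1)) - z (Fin.last (m + 1))))

/-!
Write `Q = e^S`. For fixed `z` the exponent `S` is a sum over `j` of terms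
`a_j e^{x_j} + b_j e^{-x_j}`, and likewise in `z` for fixed `x`; such a function is its own
Laplacian, so `Δ_x e^S = e^S (|∇_x S|² + S)` and `Δ_z e^S = e^S (|∇_z S|² + S)`, and the theorem
reduces to `|∇_x S|² - 2 V_x = |∇_z S|² - 2 V_z`. Expanding `(a_j e^{x_j} - b_j e^{-x_j})²`, the
products `a_j b_j` sum to `V_z` up to one term, and symmetrically in `z`; in the end both
`|∇_x S|² + 2 V_z` and `|∇_z S|² + 2 V_x` equal the sum of the squares of the monomials of `S`
plus `2 g_1 e^{2 x_1} + 2 g_{n+1} e^{-2 z_n}`.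
-/

open Finset

lemma deriv_deriv_exp_comp {f f' : ℝ → ℝ} {f'' t : ℝ} (hf : ∀ s, HasDerivAt f (f' s) s)
    (hf' : HasDerivAt f' f'' t) :
    deriv (deriv fun s => exp (f s)) t = exp (f t) * (f' t ^ 2 + f'') := by
  have hd : deriv (fun s => exp (f s)) = fun s => exp (f s) * f' s :=
    funext fun s => (hf s).exp.deriv
  have h2 : HasDerivAt (fun s => exp (f s) * f' s) (exp (f t) * f' t * f' t + exp (f t) * f'') t :=
    (hf t).exp.mul hf'
  rw [hd, h2.deriv]
  ring

lemma pd2_exp_sum {k : ℕ} (f : Fin k → ℝ → ℝ) {f' : ℝ → ℝ} {f'' : ℝ} (i : Fin k)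
    (u : Fin k → ℝ) (hf : ∀ s, HasDerivAt (f i) (f' s) s) (hf' : HasDerivAt f' f'' (u i)) :
    pd2 (fun v => exp (∑ j, f j (v j))) i u = exp (∑ j, f j (u j)) * (f' (u i) ^ 2 + f'') := by
  have hsplit (t : ℝ) :
      ∑ j, f j (Function.update u i t j) = f i t + ∑ j ∈ univ \ {i}, f j (u j) := by
    simp only [Function.apply_update f, sum_update_of_mem (mem_univ i)]
  unfold pd2
  simp only [hsplit]
  rw [deriv_deriv_exp_comp (fun s => (hf s).add_const _) hf', ← hsplit, Function.update_eq_self]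

noncomputable def expPair (a b t : ℝ) : ℝ := a * exp t + b * exp (-t)

lemma hasDerivAt_expPair (a b t : ℝ) : HasDerivAt (expPair a b) (expPair a (-b) t) t := by
  have h : HasDerivAt (fun s => a * exp s + b * exp (-s)) (a * exp t + b * (exp (-t) * -1)) t :=
    ((hasDerivAt_exp t).const_mul a).add ((hasDerivAt_neg' t).exp.const_mul b)
  exact h.congr_deriv (by simp only [expPair]; ring)

lemma expPair_neg_sq (a b t : ℝ) :
    expPair a (-b) t ^ 2 = (a * exp t) ^ 2 + (b * exp (-t)) ^ 2 - 2 * (a * b) := by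
  have h : exp t * exp (-t) = 1 := by rw [← exp_add, add_neg_cancel, exp_zero]
  simp only [expPair]
  linear_combination (-2 * a * b) * h

lemma sum_pd2_exp_sum_expPair {k : ℕ} (a b u : Fin k → ℝ) :
    ∑ i, pd2 (fun v => exp (∑ j, expPair (a j) (b j) (v j))) i u
      = exp (∑ j, expPair (a j) (b j) (u j))
        * (∑ i, expPair (a i) (-b i) (u i) ^ 2 + ∑ j, expPair (a j) (b j) (u j)) := by
  have h (i : Fin k) := pd2_exp_sum (fun j => expPair (a j) (b j)) i u
    (hasDerivAt_expPair (a i) (b i)) (by simpa using hasDerivAt_expPair (a i) (-b i) (u i))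
  simp only [h, ← mul_sum, sum_add_distrib]

lemma sum_add_ite_mul {ι R : Type*} [Fintype ι] [DecidableEq ι] [CommSemiring R]
    (a b : ι → R) (i₀ : ι) (c : R) :
    ∑ j, (a j + if j = i₀ then c else 0) * b j = ∑ j, a j * b j + c * b i₀ := by
  simp [add_mul, sum_add_distrib]

lemma sum_add_ite_sq {ι R : Type*} [Fintype ι] [DecidableEq ι] [CommSemiring R]
    (a : ι → R) (i₀ : ι) (c : R) :
    ∑ j, (a j + if j = i₀ then c else 0) ^ 2 = ∑ j, a j ^ 2 + (2 * a i₀ * c + c ^ 2) := by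
  simp [add_sq, sum_add_distrib, mul_ite, ite_pow, add_assoc]

section Kernel

variable (m : ℕ) (g : Fin (m + 3) → ℝ)

noncomputable def coeffXPos (z : Fin (m + 2) → ℝ) (j : Fin (m + 2)) : ℝ :=
  exp (-z j) + if j = 0 then g 0 * exp (z 0) else 0

noncomputable def coeffXNeg (z : Fin (m + 2) → ℝ) : Fin (m + 2) → ℝ :=
  Fin.lastCases (g (Fin.last (m + 2)) * exp (-z (Fin.last (m + 1))))
    fun i => g i.succ.castSucc * exp (z i.succ)

noncomputable def coeffZPos (x : Fin (m + 2) → ℝ) : Fin (m + 2) → ℝ :=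
  Fin.cases (g 0 * exp (x 0)) fun i => g i.succ.castSucc * exp (-x i.castSucc)

noncomputable def coeffZNeg (x : Fin (m + 2) → ℝ) (j : Fin (m + 2)) : ℝ :=
  exp (x j) + if j = Fin.last (m + 1) then g (Fin.last (m + 2)) * exp (-x (Fin.last (m + 1))) else 0

noncomputable def potentialX (x : Fin (m + 2) → ℝ) : ℝ :=
  2 * g 0 * exp (2 * x 0)
    + (∑ i : Fin (m + 1), g i.succ.castSucc * exp (x i.succ - x i.castSucc))
    + g (Fin.last (m + 1)).castSucc * g (Fin.last (m + 2))
        * exp (-x (Fin.last (m + 1)) - x (Fin.last m).castSucc)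

noncomputable def potentialZ (z : Fin (m + 2) → ℝ) : ℝ :=
  g 0 * g 1 * exp (z 0 + z 1)
    + (∑ i : Fin (m + 1), g i.succ.castSucc * exp (z i.succ - z i.castSucc))
    + 2 * g (Fin.last (m + 2)) * exp (-(2 * z (Fin.last (m + 1))))

lemma Qker_eq_exp_sum_x (x z : Fin (m + 2) → ℝ) :
    Qker m g x z = exp (∑ j, expPair (coeffXPos m g z j) (coeffXNeg m g z j) (x j)) := by
  unfold Qker
  congr 1
  simp only [expPair, coeffXPos, add_mul, ite_mul, zero_mul, sum_add_distrib, sum_ite_eq',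
    mem_univ, if_true]
  rw [Fin.sum_univ_castSucc (f := fun j => exp (-z j) * exp (x j)),
    Fin.sum_univ_castSucc (f := fun j => coeffXNeg m g z j * exp (-x j))]
  simp only [coeffXNeg, Fin.lastCases_castSucc, Fin.lastCases_last, mul_assoc, ← exp_add,
    neg_add_eq_sub, ← sub_eq_add_neg]
  ring_nf

lemma Qker_eq_exp_sum_z (x z : Fin (m + 2) → ℝ) :
    Qker m g x z = exp (∑ j, expPair (coeffZPos m g x j) (coeffZNeg m g x j) (z j)) := by
  unfold Qker
  congr 1
  simp only [expPair, coeffZNeg, add_mul, ite_mul, zero_mul, sum_add_distrib, sum_ite_eq',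
    mem_univ, if_true]
  rw [Fin.sum_univ_castSucc (f := fun j => exp (x j) * exp (-z j)),
    Fin.sum_univ_succ (f := fun j => coeffZPos m g x j * exp (z j))]
  simp only [coeffZPos, Fin.cases_succ, Fin.cases_zero, mul_assoc, ← exp_add, neg_add_eq_sub,
    ← sub_eq_add_neg]
  ring_nf

lemma sum_coeffXPos_mul_coeffXNeg (z : Fin (m + 2) → ℝ) :
    ∑ j, coeffXPos m g z j * coeffXNeg m g z j
      = potentialZ m g z - g (Fin.last (m + 2)) * exp (-(2 * z (Fin.last (m + 1)))) := by
  have h0 : coeffXNeg m g z 0 = g 1 * exp (z 1) := by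
    rw [← Fin.castSucc_zero, coeffXNeg, Fin.lastCases_castSucc, Fin.succ_zero_eq_one,
      Fin.castSucc_one]
  simp only [coeffXPos, sum_add_ite_mul, h0]
  rw [Fin.sum_univ_castSucc]
  simp only [potentialZ, coeffXNeg, Fin.lastCases_castSucc, Fin.lastCases_last,
    mul_left_comm _ (g _), ← exp_add, neg_add_eq_sub]
  rw [exp_add]
  ring_nf

lemma sum_coeffZPos_mul_coeffZNeg (x : Fin (m + 2) → ℝ) :
    ∑ j, coeffZPos m g x j * coeffZNeg m g x j = potentialX m g x - g 0 * exp (2 * x 0) := by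
  have hlast : coeffZPos m g x (Fin.last (m + 1))
      = g (Fin.last (m + 1)).castSucc * exp (-x (Fin.last m).castSucc) := by
    rw [← Fin.succ_last, coeffZPos, Fin.cases_succ]
  simp only [mul_comm (coeffZPos m g x _), coeffZNeg, sum_add_ite_mul, hlast]
  rw [Fin.sum_univ_succ]
  simp only [potentialX, coeffZPos, Fin.cases_zero, Fin.cases_succ, mul_left_comm _ (g _),
    ← exp_add, ← sub_eq_add_neg]
  rw [sub_eq_add_neg (-x _), exp_add (-x _)]
  ring_nf

lemma sum_sq_coeffX_sub_sum_sq_coeffZ (x z : Fin (m + 2) → ℝ) :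
    (∑ j, ((coeffXPos m g z j * exp (x j)) ^ 2 + (coeffXNeg m g z j * exp (-x j)) ^ 2))
      - ∑ j, ((coeffZPos m g x j * exp (z j)) ^ 2 + (coeffZNeg m g x j * exp (-z j)) ^ 2)
      = 2 * g 0 * exp (2 * x 0) - 2 * g (Fin.last (m + 2)) * exp (-(2 * z (Fin.last (m + 1)))) := by
  have hXPos (j : Fin (m + 2)) : coeffXPos m g z j * exp (x j)
      = exp (x j - z j) + if j = 0 then g 0 * exp (x 0 + z 0) else 0 := by
    simp only [coeffXPos, add_mul, ite_mul, zero_mul, mul_assoc, ← exp_add, neg_add_eq_sub]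
    split_ifs with hj
    · subst hj; ring_nf
    · rfl
  have hZNeg (j : Fin (m + 2)) : coeffZNeg m g x j * exp (-z j)
      = exp (x j - z j) + if j = Fin.last (m + 1) then
          g (Fin.last (m + 2)) * exp (-x (Fin.last (m + 1)) - z (Fin.last (m + 1))) else 0 := by
    simp only [coeffZNeg, add_mul, ite_mul, zero_mul, mul_assoc, ← exp_add, ← sub_eq_add_neg]
    split_ifs with hj
    · subst hj; rfl
    · rfl
  have hXNeg : ∑ j, (coeffXNeg m g z j * exp (-x j)) ^ 2
      = ∑ i : Fin (m + 1), (g i.succ.castSucc * exp (z i.succ - x i.castSucc)) ^ 2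
        + (g (Fin.last (m + 2)) * exp (-x (Fin.last (m + 1)) - z (Fin.last (m + 1)))) ^ 2 := by
    rw [Fin.sum_univ_castSucc]
    simp only [coeffXNeg, Fin.lastCases_castSucc, Fin.lastCases_last, mul_assoc, ← exp_add,
      ← sub_eq_add_neg]
    ring_nf
  have hZPos : ∑ j, (coeffZPos m g x j * exp (z j)) ^ 2
      = (g 0 * exp (x 0 + z 0)) ^ 2
        + ∑ i : Fin (m + 1), (g i.succ.castSucc * exp (z i.succ - x i.castSucc)) ^ 2 := by
    rw [Fin.sum_univ_succ]
    simp only [coeffZPos, Fin.cases_zero, Fin.cases_succ, mul_assoc, ← exp_add, neg_add_eq_sub]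
  have h0 : exp (x 0 - z 0) * exp (x 0 + z 0) = exp (2 * x 0) := by
    rw [← exp_add]; ring_nf
  have hlast : exp (x (Fin.last (m + 1)) - z (Fin.last (m + 1)))
      * exp (-x (Fin.last (m + 1)) - z (Fin.last (m + 1))) = exp (-(2 * z (Fin.last (m + 1)))) := by
    rw [← exp_add]; ring_nf
  simp only [sum_add_distrib, hXPos, hZNeg, sum_add_ite_sq, hXNeg, hZPos]
  linear_combination 2 * g 0 * h0 - 2 * g (Fin.last (m + 2)) * hlast

lemma sum_sq_gradient_sub_potential_eq (x z : Fin (m + 2) → ℝ) :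
    ∑ i, expPair (coeffXPos m g z i) (-coeffXNeg m g z i) (x i) ^ 2 - 2 * potentialX m g x
      = ∑ i, expPair (coeffZPos m g x i) (-coeffZNeg m g x i) (z i) ^ 2
        - 2 * potentialZ m g z := by
  simp only [expPair_neg_sq, sum_sub_distrib, ← mul_sum]
  linear_combination sum_sq_coeffX_sub_sum_sq_coeffZ m g x z
    - 2 * sum_coeffXPos_mul_coeffXNeg m g z + 2 * sum_coeffZPos_mul_coeffZNeg m g x

end Kernel

/-- The kernel `Q` intertwines the two quadratic Hamiltonians of the twisted
affine `A^{(2)}_{2n−1}` closed Toda chain with different coupling constants,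
`n = m + 2 ≥ 2`. -/
theorem A2odd_A2odd_intertwining (m : ℕ) (g : Fin (m + 3) → ℝ)
    (x z : Fin (m + 2) → ℝ) :
    -(1/2) * (∑ i : Fin (m + 2), pd2 (fun u => Qker m g u z) i x)
      + (2 * g 0 * Real.exp (2 * x 0)
          + (∑ i : Fin (m + 1), g i.succ.castSucc * Real.exp (x i.succ - x i.castSucc))
          + g (Fin.last (m + 1)).castSucc * g (Fin.last (m + 2))
              * Real.exp (-x (Fin.last (m + 1)) - x (Fin.last m).castSucc)) * Qker m g x z
    = -(1/2) * (∑ i : Fin (m + 2), pd2 (fun v => Qker m g x v) i z)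
      + (g 0 * g 1 * Real.exp (z 0 + z 1)
          + (∑ i : Fin (m + 1), g i.succ.castSucc * Real.exp (z i.succ - z i.castSucc))
          + 2 * g (Fin.last (m + 2))
              * Real.exp (-(2 * z (Fin.last (m + 1))))) * Qker m g x z := by
  have hx : (fun u => Qker m g u z) = _ := funext fun u => Qker_eq_exp_sum_x m g u z
  have hz : (fun v => Qker m g x v) = _ := funext fun v => Qker_eq_exp_sum_z m g x v
  have hexponent := exp_injective <|
    (Qker_eq_exp_sum_x m g x z).symm.trans (Qker_eq_exp_sum_z m g x z)
  have key := sum_sq_gradient_sub_potential_eq m g x z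
  rw [potentialX, potentialZ] at key
  rw [hx, hz, sum_pd2_exp_sum_expPair, sum_pd2_exp_sum_expPair, Qker_eq_exp_sum_x, ← hexponent]
  linear_combination
    (-(1 / 2) * exp (∑ j, expPair (coeffXPos m g z j) (coeffXNeg m g z j) (x j))) * key
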